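/- Let H be the Hilbert space ℓ² of square-summable complex sequences indexed by ℕ with standard orthonormal basis (e_k). Let a, b : ℤ → ℂ be finitely supported and let c be their convolution, c(k) = Σ_{j∈ℤ} a(j)·b(k−j). Suppose T_a, T_b, T_c : H → H are continuous linear operators with matrix entries ⟨T_a e_n, e_m⟩ = a(m−n), ⟨T_b e_n, e_m⟩ = b(m−n), ⟨T_c e_n, e_m⟩ = c(m−n) for all m, n ∈ ℕ, and let K₁, K₂ : H → H be compact continuous linear operators. Then (T_a + K₁) ∘ (T_b + K₂) − T_c is a compact operator; that is, the product of two compact perturbations of Toeplitz operators is a compact perturbation of the Toeplitz operator whose symbol is the product of the symbols. -/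

import Mathlib

/-!
The `(m, n)` entry of `T_a T_b` is `∑_{l ≥ 0} a(m - l) b(l - n)`, while that of `T_c` is the full
sum over `l ∈ ℤ`. They differ only by the terms with `l < 0`, which vanish once `m` lies above the
support of `a`. Hence `T_a T_b - T_c` has only finitely many nonzero rows, so it has finite rank and
is compact; the remaining terms of the product are compact because compact operators form an ideal.
-/

open scoped ENNReal

theorem ContinuousLinearMap.isCompactOperator_of_forall_mem {𝕜 E F : Type*}
    [NontriviallyNormedField 𝕜] [ProperSpace 𝕜] [NormedAddCommGroup E] [NormedSpace 𝕜 E]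
    [NormedAddCommGroup F] [NormedSpace 𝕜 F] (T : E →L[𝕜] F) (V : Submodule 𝕜 F)
    [FiniteDimensional 𝕜 V] (hT : ∀ x, T x ∈ V) : IsCompactOperator T :=
  have := FiniteDimensional.proper 𝕜 V
  (isCompactOperator_of_locallyCompactSpace_dom (T.codRestrict V hT)).continuous_comp
    continuous_subtype_val

namespace lp

variable {α β 𝕜 : Type*} [DecidableEq α] [NontriviallyNormedField 𝕜] {p : ℝ≥0∞}

theorem eq_sum_smul_single_of_apply_eq_zero {f : lp (fun _ : α => 𝕜) p} {s : Finset α}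
    (hf : ∀ i ∉ s, f i = 0) : f = ∑ i ∈ s, f i • lp.single p i 1 := by
  ext j
  rw [lp.coeFn_sum, Finset.sum_apply]
  by_cases hj : j ∈ s <;> simp [Pi.single_apply, hj, hf j]

variable [Fact (1 ≤ p)]

theorem isCompactOperator_of_apply_eq_zero [ProperSpace 𝕜] {E : Type*} [NormedAddCommGroup E]
    [NormedSpace 𝕜 E] (T : E →L[𝕜] lp (fun _ : α => 𝕜) p) (s : Finset α)
    (hT : ∀ x, ∀ i ∉ s, T x i = 0) : IsCompactOperator T := by
  let V := Submodule.span 𝕜 (Set.range fun i : s => lp.single (E := fun _ : α => 𝕜) p i 1)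
  have : FiniteDimensional 𝕜 V := FiniteDimensional.span_of_finite 𝕜 (Set.finite_range _)
  refine T.isCompactOperator_of_forall_mem V fun x => ?_
  rw [eq_sum_smul_single_of_apply_eq_zero (hT x)]
  exact Submodule.sum_mem _ fun i hi =>
    Submodule.smul_mem _ _ (Submodule.subset_span ⟨⟨i, hi⟩, rfl⟩)

theorem hasSum_mul_apply_single (hp : p ≠ ⊤)
    (T : lp (fun _ : α => 𝕜) p →L[𝕜] lp (fun _ : β => 𝕜) p) (x : lp (fun _ : α => 𝕜) p)
    (m : β) : HasSum (fun n => x n * T (lp.single p n 1) m) (T x m) := by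
  have hsingle : ∀ n, x n * T (lp.single p n 1) m = T (lp.single p n (x n)) m := fun n => by
    rw [← mul_one (x n), ← smul_eq_mul (x n) 1, lp.single_smul, map_smul, smul_eq_mul, mul_one]
    rfl
  simp only [hsingle]
  exact ((lp.evalCLM 𝕜 (fun _ : β => 𝕜) p m).comp T).hasSum (lp.hasSum_single hp x)

theorem apply_eq_zero_of_apply_single_eq_zero (hp : p ≠ ⊤)
    (T : lp (fun _ : α => 𝕜) p →L[𝕜] lp (fun _ : β => 𝕜) p) {m : β}
    (hT : ∀ n, T (lp.single p n 1) m = 0) (x : lp (fun _ : α => 𝕜) p) : T x m = 0 :=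
  (hasSum_mul_apply_single hp T x m).unique (by simp [hT])

end lp

theorem hasSum_nat_mul_eq_finsum_of_mem_upperBounds {R : Type*} [Semiring R]
    [TopologicalSpace R] {a : ℤ → R} (b : ℤ → R) (ha : a.support.Finite) {N m : ℤ}
    (hN : N ∈ upperBounds a.support) (hm : N < m)
    (n : ℤ) : HasSum (fun l : ℕ => a (m - l) * b (l - n)) (∑ᶠ j, a j * b (m - n - j)) := by
  set f : ℤ → R := fun l => a (m - l) * b (l - n)
  have hf : f.support.Finite :=
    (ha.preimage sub_right_injective.injOn).subset fun l hl => left_ne_zero_of_mul hl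
  have hsum : ∑ᶠ j, a j * b (m - n - j) = ∑ᶠ l, f l := by
    rw [← finsum_comp_equiv (Equiv.subLeft m)]
    congr 1 with j
    rw [Equiv.subLeft_apply, sub_sub_sub_cancel_left]
  have hneg : ∀ l ∉ Set.range ((↑) : ℕ → ℤ), f l = 0 := fun l hl => by
    have hl_neg : l < 0 := by simpa using hl
    have ha0 : a (m - l) = 0 := Function.notMem_support.mp fun h => (hN h).not_gt (by omega)
    simp only [f, ha0, zero_mul]
  rw [hsum, ← tsum_eq_finsum (L := .unconditional ℤ) hf]
  exact (Nat.cast_injective.hasSum_iff hneg).mpr (summable_of_hasFiniteSupport hf).hasSum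

def IsToeplitz {𝕜 : Type*} [NontriviallyNormedField 𝕜] {p : ℝ≥0∞} [Fact (1 ≤ p)] (a : ℤ → 𝕜)
    (T : lp (fun _ : ℕ => 𝕜) p →L[𝕜] lp (fun _ : ℕ => 𝕜) p) : Prop :=
  ∀ m n : ℕ, T (lp.single p n 1) m = a (m - n)

namespace IsToeplitz

variable {𝕜 : Type*} [NontriviallyNormedField 𝕜] {p : ℝ≥0∞} [Fact (1 ≤ p)] {a b c : ℤ → 𝕜}
  {Ta Tb Tc : lp (fun _ : ℕ => 𝕜) p →L[𝕜] lp (fun _ : ℕ => 𝕜) p}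

theorem hasSum_comp_apply_single (hp : p ≠ ⊤) (hTa : IsToeplitz a Ta) (hTb : IsToeplitz b Tb)
    (m n : ℕ) : HasSum (fun l : ℕ => a (m - l) * b (l - n)) (Ta (Tb (lp.single p n 1)) m) := by
  simpa only [hTa m, hTb _ n, mul_comm] using
    lp.hasSum_mul_apply_single hp Ta (Tb (lp.single p n 1)) m

theorem comp_sub_apply_eq_zero (hp : p ≠ ⊤) (hTa : IsToeplitz a Ta) (hTb : IsToeplitz b Tb)
    (hTc : IsToeplitz c Tc) (ha : a.support.Finite) (hc : ∀ k, c k = ∑ᶠ j, a j * b (k - j))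
    {N : ℤ} (hN : N ∈ upperBounds a.support) {m : ℕ} (hm : N < m) (x : lp (fun _ : ℕ => 𝕜) p) :
    (Ta.comp Tb - Tc) x m = 0 := by
  refine lp.apply_eq_zero_of_apply_single_eq_zero hp _ (fun n => ?_) x
  have hTab := (hTa.hasSum_comp_apply_single hp hTb m n).unique
    (hasSum_nat_mul_eq_finsum_of_mem_upperBounds b ha hN hm n)
  simp [hTab, hTc m n, hc]

theorem isCompactOperator_comp_sub [ProperSpace 𝕜] (hp : p ≠ ⊤) (hTa : IsToeplitz a Ta)
    (hTb : IsToeplitz b Tb) (hTc : IsToeplitz c Tc) (ha : a.support.Finite)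
    (hc : ∀ k, c k = ∑ᶠ j, a j * b (k - j)) : IsCompactOperator (Ta.comp Tb - Tc) := by
  obtain ⟨N, hN⟩ := ha.bddAbove
  refine lp.isCompactOperator_of_apply_eq_zero _ (Finset.range (N.toNat + 1)) fun x m hm =>
    hTa.comp_sub_apply_eq_zero hp hTb hTc ha hc hN ?_ x
  rw [Finset.mem_range, not_lt] at hm
  omega

end IsToeplitz

theorem product_of_compact_perturbations_of_toeplitz_general
    (a b c : ℤ → ℂ)
    (ha : (Function.support a).Finite)
    (hc : ∀ k : ℤ, c k = ∑ᶠ j : ℤ, a j * b (k - j))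
    (Ta Tb Tc : lp (fun _ : ℕ => ℂ) 2 →L[ℂ] lp (fun _ : ℕ => ℂ) 2)
    (hTa : ∀ m n : ℕ, (Ta (lp.single 2 n 1)) m = a ((m : ℤ) - (n : ℤ)))
    (hTb : ∀ m n : ℕ, (Tb (lp.single 2 n 1)) m = b ((m : ℤ) - (n : ℤ)))
    (hTc : ∀ m n : ℕ, (Tc (lp.single 2 n 1)) m = c ((m : ℤ) - (n : ℤ)))
    (K₁ K₂ : lp (fun _ : ℕ => ℂ) 2 →L[ℂ] lp (fun _ : ℕ => ℂ) 2)
    (hK₁ : IsCompactOperator K₁) (hK₂ : IsCompactOperator K₂) :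
    IsCompactOperator ((Ta + K₁).comp (Tb + K₂) - Tc) := by
  have hTaTb : IsCompactOperator (Ta.comp Tb - Tc) :=
    IsToeplitz.isCompactOperator_comp_sub ENNReal.ofNat_ne_top hTa hTb hTc ha hc
  have hsplit : (Ta + K₁).comp (Tb + K₂) - Tc =
      (Ta.comp Tb - Tc) + (Ta.comp K₂ + K₁.comp (Tb + K₂)) := by
    rw [ContinuousLinearMap.add_comp, ContinuousLinearMap.comp_add]
    abel
  rw [hsplit]
  exact hTaTb.add ((hK₂.clm_comp Ta).add (hK₁.comp_clm (Tb + K₂)))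

/-- The product of two compact perturbations of Toeplitz operators on `ℓ²` is a compact
perturbation of the Toeplitz operator whose symbol is the product of the symbols
(i.e. whose coefficient sequence is the convolution of the coefficient sequences). -/
theorem product_of_compact_perturbations_of_toeplitz
    (a b c : ℤ → ℂ)
    (ha : (Function.support a).Finite) (hb : (Function.support b).Finite)
    (hc : ∀ k : ℤ, c k = ∑ᶠ j : ℤ, a j * b (k - j))
    (Ta Tb Tc : lp (fun _ : ℕ => ℂ) 2 →L[ℂ] lp (fun _ : ℕ => ℂ) 2)
    (hTa : ∀ m n : ℕ, (Ta (lp.single 2 n 1)) m = a ((m : ℤ) - (n : ℤ)))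
    (hTb : ∀ m n : ℕ, (Tb (lp.single 2 n 1)) m = b ((m : ℤ) - (n : ℤ)))
    (hTc : ∀ m n : ℕ, (Tc (lp.single 2 n 1)) m = c ((m : ℤ) - (n : ℤ)))
    (K₁ K₂ : lp (fun _ : ℕ => ℂ) 2 →L[ℂ] lp (fun _ : ℕ => ℂ) 2)
    (hK₁ : IsCompactOperator K₁) (hK₂ : IsCompactOperator K₂) :
    IsCompactOperator ((Ta + K₁).comp (Tb + K₂) - Tc) :=
  product_of_compact_perturbations_of_toeplitz_general a b c ha hc Ta Tb Tc hTa hTb hTc K₁ K₂ hK₁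
    hK₂
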